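/- Let C ≤ (Fin 20 → ZMod 2) be the row space of the nine binary vectors (qubits grouped into five blocks of four): r₁ = 1111 0000 0000 0000 0000, r₂ = 0000 1111 0000 0000 0000, r₃ = 0000 0000 1111 0000 0000, r₄ = 0000 0000 0000 1111 0000, r₅ = 0000 0000 0000 0000 1111, r₆ = 1100 1010 1010 1100 0000, r₇ = 1010 0110 0110 1010 0000, r₈ = 0000 1100 1010 1010 1100, r₉ = 0000 1010 0110 0110 1010. Then C is self-orthogonal (C ⊆ C^⊥ under the standard dot product), the F₂-dimension of C equals 9, and the minimum Hamming weight over the set C^⊥ \ C equals 6. (That is, the self-dual CSS code with both X- and Z-checks given by C is a [[20,2,6]] code, obtained by concatenating the [[5,1,3]] code with the [[4,2,2]] code.) -/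

import Mathlib

/-- The standard dot product on binary vectors. -/
def dotV {n : ℕ} (u v : Fin n → ZMod 2) : ZMod 2 := ∑ j, u j * v j

/-- The Hamming weight of a binary vector. -/
def hw {n : ℕ} (v : Fin n → ZMod 2) : ℕ := (Finset.univ.filter fun j => v j ≠ 0).card

def r1 : Fin 20 → ZMod 2 := ![1,1,1,1, 0,0,0,0, 0,0,0,0, 0,0,0,0, 0,0,0,0]
def r2 : Fin 20 → ZMod 2 := ![0,0,0,0, 1,1,1,1, 0,0,0,0, 0,0,0,0, 0,0,0,0]
def r3 : Fin 20 → ZMod 2 := ![0,0,0,0, 0,0,0,0, 1,1,1,1, 0,0,0,0, 0,0,0,0]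
def r4 : Fin 20 → ZMod 2 := ![0,0,0,0, 0,0,0,0, 0,0,0,0, 1,1,1,1, 0,0,0,0]
def r5 : Fin 20 → ZMod 2 := ![0,0,0,0, 0,0,0,0, 0,0,0,0, 0,0,0,0, 1,1,1,1]
def r6 : Fin 20 → ZMod 2 := ![1,1,0,0, 1,0,1,0, 1,0,1,0, 1,1,0,0, 0,0,0,0]
def r7 : Fin 20 → ZMod 2 := ![1,0,1,0, 0,1,1,0, 0,1,1,0, 1,0,1,0, 0,0,0,0]
def r8 : Fin 20 → ZMod 2 := ![0,0,0,0, 1,1,0,0, 1,0,1,0, 1,0,1,0, 1,1,0,0]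
def r9 : Fin 20 → ZMod 2 := ![0,0,0,0, 1,0,1,0, 0,1,1,0, 0,1,1,0, 1,0,1,0]

/-- The check matrix row space of the `[[20,2,6]]` self-dual CSS code. -/
def C2026 : Submodule (ZMod 2) (Fin 20 → ZMod 2) :=
  Submodule.span (ZMod 2) {r1, r2, r3, r4, r5, r6, r7, r8, r9}

/-!
The dot product on `𝔽₂²⁰` is nondegenerate, so `C2026ᗮ` has dimension `20 - 9 = 11`. The nine
generators of `C2026` together with two logical vectors are linearly independent (an explicit left
inverse witnesses this) and orthogonal to `C2026`, so they span `C2026ᗮ`. Every vector of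
`C2026ᗮ \ C2026` is thus a codeword plus a nonzero combination of the two logical vectors, and a
finite check of these `3 · 2⁹` vectors shows that each has weight at least `6`.
-/

open Matrix Module Submodule LinearMap.BilinForm

section DotProduct

variable {K ι : Type*} [Field K] [Fintype ι]

theorem dotProductBilin_nondegenerate :
    (dotProductBilin K K : LinearMap.BilinForm K (ι → K)).Nondegenerate := by
  classical
  refine Nondegenerate.ofSeparatingLeft fun v hv => ?_
  ext i
  simpa using hv (Pi.single i 1)

theorem mem_orthogonal_dotProductBilin_iff {W : Submodule K (ι → K)} {v : ι → K} :
    v ∈ LinearMap.BilinForm.orthogonal (dotProductBilin K K) W ↔ ∀ w ∈ W, v ⬝ᵥ w = 0 := by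
  simp [dotProduct_comm]

theorem finrank_orthogonal_dotProductBilin (W : Submodule K (ι → K)) :
    finrank K (LinearMap.BilinForm.orthogonal (dotProductBilin K K) W) =
      Fintype.card ι - finrank K W := by
  rw [finrank_orthogonal dotProductBilin_nondegenerate, finrank_fintype_fun_eq_card]

end DotProduct

theorem LinearMap.BilinForm.mem_orthogonal_span_iff {R M : Type*} [CommSemiring R]
    [AddCommMonoid M] [Module R M] (B : LinearMap.BilinForm R M) {s : Set M} {m : M} :
    m ∈ B.orthogonal (span R s) ↔ ∀ n ∈ s, B n m = 0 := by
  refine ⟨fun h n hn => h n (subset_span hn), fun h n hn => ?_⟩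
  have : span R s ≤ LinearMap.ker (B.flip m) := span_le.2 h
  exact this hn

theorem Matrix.linearIndependent_of_mulVec_eq_single {R m n : Type*} [CommSemiring R]
    [Fintype m] [DecidableEq m] [Fintype n] (Y : Matrix m n R) {e : m → n → R}
    (h : ∀ l, Y *ᵥ e l = Pi.single l 1) : LinearIndependent R e := by
  refine LinearIndependent.of_comp Y.mulVecLin ?_
  convert (Pi.basisFun R m).linearIndependent
  ext l
  simp [h]

def codeGens : Fin 9 → Fin 20 → ZMod 2 := ![r1, r2, r3, r4, r5, r6, r7, r8, r9]

/-- With one qubit of the `[[5,1,3]]` code per block of four, encoded as `X ↦ 1100`, `Z ↦ 1010`,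
`Y ↦ 0110` (so that `r6, …, r9` encode its stabilizers `XZZXI, …`), these are the logical
operators `XXIZI` and `ZZIYI`. -/
def logicals : Fin 2 → Fin 20 → ZMod 2 :=
  ![![1,1,0,0, 1,1,0,0, 0,0,0,0, 1,0,1,0, 0,0,0,0],
    ![1,0,1,0, 1,0,1,0, 0,0,0,0, 0,1,1,0, 0,0,0,0]]

def dualGens : Fin (9 + 2) → Fin 20 → ZMod 2 := Fin.append codeGens logicals

def dualGensCertificate : Matrix (Fin (9 + 2)) (Fin 20) (ZMod 2) :=
  ![![0,0,0,1, 0,0,0,0, 0,0,0,0, 0,0,0,0, 0,0,0,0],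
    ![0,0,0,0, 0,0,0,1, 0,0,0,0, 0,0,0,0, 0,0,0,0],
    ![0,0,0,0, 0,0,0,0, 0,0,0,1, 0,0,0,0, 0,0,0,0],
    ![0,0,0,0, 0,0,0,0, 0,0,0,0, 0,0,0,1, 0,0,0,0],
    ![0,0,0,0, 0,0,0,0, 0,0,0,0, 0,0,0,0, 0,0,0,1],
    ![0,0,0,0, 0,0,0,0, 1,0,0,1, 0,0,0,0, 0,1,0,1],
    ![0,0,0,0, 0,0,0,0, 0,1,0,1, 0,0,0,0, 1,1,0,0],
    ![0,0,0,0, 0,0,0,0, 0,0,0,0, 0,0,0,0, 0,1,0,1],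
    ![0,0,0,0, 0,0,0,0, 0,0,0,0, 0,0,0,0, 1,1,0,0],
    ![0,1,0,1, 0,0,0,0, 1,0,0,1, 0,0,0,0, 0,1,0,1],
    ![1,1,0,0, 0,0,0,0, 0,1,0,1, 0,0,0,0, 1,1,0,0]]

notation "C2026ᗮ" => LinearMap.BilinForm.orthogonal (dotProductBilin (ZMod 2) (ZMod 2)) C2026

theorem C2026_eq_span_codeGens : C2026 = span (ZMod 2) (Set.range codeGens) := by
  rw [C2026]
  congr 1
  ext v
  simp [codeGens, or_comm, or_left_comm]

theorem codeGens_dotProduct_codeGens : ∀ i j, codeGens i ⬝ᵥ codeGens j = 0 := by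
  decide

theorem C2026_le_orthogonal : C2026 ≤ C2026ᗮ := by
  rw [C2026_eq_span_codeGens, span_le]
  rintro _ ⟨i, rfl⟩
  rw [SetLike.mem_coe, mem_orthogonal_span_iff]
  rintro _ ⟨j, rfl⟩
  exact codeGens_dotProduct_codeGens j i

theorem dualGensCertificate_mulVec : ∀ l, dualGensCertificate *ᵥ dualGens l = Pi.single l 1 := by
  decide

theorem linearIndependent_dualGens : LinearIndependent (ZMod 2) dualGens :=
  dualGensCertificate.linearIndependent_of_mulVec_eq_single dualGensCertificate_mulVec

theorem finrank_C2026 : finrank (ZMod 2) C2026 = 9 := by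
  have h := linearIndependent_dualGens.comp _ (Fin.castAdd_injective 9 2)
  simp only [dualGens, Function.comp_def, Fin.append_left] at h
  rw [C2026_eq_span_codeGens, finrank_span_eq_card h, Fintype.card_fin]

theorem codeGens_dotProduct_dualGens : ∀ j k, codeGens j ⬝ᵥ dualGens k = 0 := by
  decide

theorem span_dualGens_eq_orthogonal : span (ZMod 2) (Set.range dualGens) = C2026ᗮ := by
  refine eq_of_le_of_finrank_eq ?_ ?_
  · rw [span_le]
    rintro _ ⟨k, rfl⟩
    rw [SetLike.mem_coe, C2026_eq_span_codeGens, mem_orthogonal_span_iff]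
    rintro _ ⟨j, rfl⟩
    exact codeGens_dotProduct_dualGens j k
  · rw [finrank_span_eq_card linearIndependent_dualGens, finrank_orthogonal_dotProductBilin,
      finrank_C2026]
    simp

theorem six_le_hw_add_logicals : ∀ g : Fin 9 → ZMod 2, ∀ h : Fin 2 → ZMod 2, h ≠ 0 →
    6 ≤ hw (∑ i, g i • codeGens i + ∑ j, h j • logicals j) := by
  decide +kernel

theorem six_le_hw_of_mem_orthogonal {v : Fin 20 → ZMod 2} (hv : v ∈ C2026ᗮ) (hvC : v ∉ C2026) :
    6 ≤ hw v := by
  rw [← span_dualGens_eq_orthogonal, mem_span_range_iff_exists_fun] at hv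
  obtain ⟨b, rfl⟩ := hv
  rw [Fin.sum_univ_add] at hvC ⊢
  simp only [dualGens, Fin.append_left, Fin.append_right] at hvC ⊢
  refine six_le_hw_add_logicals _ _ fun h0 => hvC ?_
  simp only [congrFun h0, Pi.zero_apply, zero_smul, Finset.sum_const_zero, add_zero]
  rw [C2026_eq_span_codeGens]
  exact sum_mem fun i _ => smul_mem _ _ (subset_span ⟨i, rfl⟩)

theorem logicals_mem_orthogonal (j : Fin 2) : logicals j ∈ C2026ᗮ := by
  rw [← span_dualGens_eq_orthogonal]
  exact subset_span ⟨Fin.natAdd 9 j, Fin.append_right _ _ _⟩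

theorem hw_logicals_zero : hw (logicals 0) = 6 := by
  decide

theorem logicals_zero_notMem : logicals 0 ∉ C2026 := by
  intro h
  have : logicals 0 ⬝ᵥ logicals 1 = 1 := by decide
  exact one_ne_zero (this ▸ logicals_mem_orthogonal 1 _ h)

theorem stmt14 :
    (∀ u ∈ C2026, ∀ v ∈ C2026, dotV u v = 0) ∧
    Module.finrank (ZMod 2) C2026 = 9 ∧
    sInf (hw '' {v : Fin 20 → ZMod 2 | (∀ c ∈ C2026, dotV v c = 0) ∧ v ∉ C2026}) = 6 := by
  have hdual (v : Fin 20 → ZMod 2) : (∀ c ∈ C2026, dotV v c = 0) ↔ v ∈ C2026ᗮ :=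
    mem_orthogonal_dotProductBilin_iff.symm
  refine ⟨fun u hu v hv => C2026_le_orthogonal hv u hu, finrank_C2026, ?_⟩
  refine IsLeast.csInf_eq ⟨⟨logicals 0, ⟨(hdual _).2 (logicals_mem_orthogonal 0),
    logicals_zero_notMem⟩, hw_logicals_zero⟩, ?_⟩
  rintro _ ⟨v, ⟨hv, hvC⟩, rfl⟩
  exact six_le_hw_of_mem_orthogonal ((hdual v).1 hv) hvC
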